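/- There is an absolute constant C such that the following holds. Let D be a probability distribution on ℝ^d × {−1,1}, let p : ℝ^d → ℝ be measurable, let r, ε ∈ (0,1), and let α ≥ 0. Assume: (i) E_{t∼U[−1,1]}[ E_{(x,y)∼D}[ φ_{sign(p−t),10r}(x) ] ] ≤ α, and (ii) Pr over (x,y)∼D and independent t∼U[−1,1] that φ_{sign(p−t),10r}(x) > 0.75 is at most ε. Then there exist t₁, t₂, t₃, t₄ ∈ [−1,1] and w₁, w₂, w₃, w₄ ≥ 0 with Σᵢ wᵢ = 1 such that: Σᵢ wᵢ · err_D(x ↦ sign(p(x) − tᵢ)) ≤ E_{t∼U[−1,1]}[ err_D(x ↦ sign(p(x) − t)) ] + C·ε; Σᵢ wᵢ · E_{(x,y)∼D}[ φ_{sign(p−tᵢ),10r}(x) ] ≤ 2α + C·ε; and Σᵢ wᵢ · Pr_{(x,y)∼D}[ φ_{sign(p−tᵢ),10r}(x) > 0.8 ] ≤ C·ε. -/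

import Mathlib

open MeasureTheory
open scoped RealInnerProductSpace ENNReal

noncomputable def sgn (v : ℝ) : ℝ := if 0 ≤ v then 1 else -1

noncomputable def clip (v : ℝ) : ℝ := max (-1) (min 1 v)

noncomputable def stdGaussian (d : ℕ) : Measure (EuclideanSpace ℝ (Fin d)) :=
  Measure.map (MeasurableEquiv.toLp 2 (Fin d → ℝ))
    (Measure.pi fun _ : Fin d => ProbabilityTheory.gaussianReal 0 1)

noncomputable def unifI : Measure ℝ :=
  (2⁻¹ : ℝ≥0∞) • (volume.restrict (Set.Icc (-1 : ℝ) 1))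

noncomputable def lns {d : ℕ} (g : EuclideanSpace ℝ (Fin d) → ℝ) (η : ℝ)
    (x : EuclideanSpace ℝ (Fin d)) : ℝ :=
  ((stdGaussian d) {z | g x ≠ g (x + η • z)}).toReal

noncomputable def errD {d : ℕ} (D : Measure (EuclideanSpace ℝ (Fin d) × ℝ))
    (h : EuclideanSpace ℝ (Fin d) → ℝ) : ℝ :=
  (D {p | h p.1 ≠ p.2}).toReal

noncomputable def optD {d : ℕ} (D : Measure (EuclideanSpace ℝ (Fin d) × ℝ)) : ℝ :=
  sInf {e | ∃ (u : EuclideanSpace ℝ (Fin d)) (τ : ℝ), ‖u‖ = 1 ∧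
    e = errD D (fun x => sgn (⟪u, x⟫ - τ))}

def IsLogConcave {d : ℕ} (D : Measure (EuclideanSpace ℝ (Fin d))) : Prop :=
  ∃ f : EuclideanSpace ℝ (Fin d) → ℝ,
    (∀ x, 0 ≤ f x) ∧
    D = volume.withDensity (fun x => ENNReal.ofReal (f x)) ∧
    Convex ℝ {x | 0 < f x} ∧
    ConcaveOn ℝ {x | 0 < f x} (fun x => Real.log (f x))

def IsIsotropic {d : ℕ} (D : Measure (EuclideanSpace ℝ (Fin d))) : Prop :=
  (∫ x, x ∂D) = 0 ∧
  ∀ i j : Fin d, (∫ x, x i * x j ∂D) = if i = j then 1 else 0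

def IsSubgaussian {d : ℕ} (C₀ : ℝ) (D : Measure (EuclideanSpace ℝ (Fin d))) : Prop :=
  ∀ u : EuclideanSpace ℝ (Fin d), ‖u‖ = 1 → ∀ t : ℝ, 0 ≤ t →
    D {x | t < |⟪u, x⟫|} ≤ ENNReal.ofReal (Real.exp (-(C₀ * t ^ 2)))

noncomputable def peval {d : ℕ} (p : MvPolynomial (Fin d) ℝ)
    (x : EuclideanSpace ℝ (Fin d)) : ℝ :=
  MvPolynomial.eval (fun i => x i) p

def IsPTF (d k : ℕ) (g : EuclideanSpace ℝ (Fin d) → ℝ) : Prop :=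
  ∃ p : MvPolynomial (Fin d) ℝ, p.totalDegree ≤ k ∧ ∀ x, g x = sgn (peval p x)

-- aux
instance stdGaussian_prob (d : ℕ) : IsProbabilityMeasure (stdGaussian d) :=
  Measure.isProbabilityMeasure_map (Measurable.aemeasurable (by fun_prop))

instance unifI_prob : IsProbabilityMeasure unifI := by
  constructor
  rw [unifI, Measure.smul_apply, Measure.restrict_apply MeasurableSet.univ,
    Set.univ_inter, Real.volume_Icc]
  norm_num
  exact ENNReal.inv_mul_cancel (by norm_num) (by norm_num)

lemma sgn_meas : Measurable sgn :=
  Measurable.ite measurableSet_Ici measurable_const measurable_const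

lemma toReal_prob_le_one {β : Type*} [MeasurableSpace β] (μ : Measure β)
    [IsProbabilityMeasure μ] (s : Set β) : (μ s).toReal ≤ 1 :=
  ENNReal.toReal_le_of_le_ofReal zero_le_one (by simpa using prob_le_one)

lemma lns_nonneg {d : ℕ} (g : EuclideanSpace ℝ (Fin d) → ℝ) (η : ℝ)
    (x : EuclideanSpace ℝ (Fin d)) : 0 ≤ lns g η x := ENNReal.toReal_nonneg

lemma lns_le_one {d : ℕ} (g : EuclideanSpace ℝ (Fin d) → ℝ) (η : ℝ)
    (x : EuclideanSpace ℝ (Fin d)) : lns g η x ≤ 1 := toReal_prob_le_one _ _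

lemma F_meas {d : ℕ} (p : EuclideanSpace ℝ (Fin d) → ℝ) (hp : Measurable p) (η : ℝ) :
    Measurable (fun tp : ℝ × EuclideanSpace ℝ (Fin d) =>
      lns (fun y => sgn (p y - tp.1)) η tp.2) := by
  have hS : MeasurableSet {w : (ℝ × EuclideanSpace ℝ (Fin d)) × EuclideanSpace ℝ (Fin d) |
      sgn (p w.1.2 - w.1.1) ≠ sgn (p (w.1.2 + η • w.2) - w.1.1)} := by
    have h1 : Measurable (fun w : (ℝ × EuclideanSpace ℝ (Fin d)) × EuclideanSpace ℝ (Fin d) =>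
        sgn (p w.1.2 - w.1.1)) :=
      sgn_meas.comp ((hp.comp measurable_fst.snd).sub measurable_fst.fst)
    have h2 : Measurable (fun w : (ℝ × EuclideanSpace ℝ (Fin d)) × EuclideanSpace ℝ (Fin d) =>
        sgn (p (w.1.2 + η • w.2) - w.1.1)) :=
      sgn_meas.comp ((hp.comp (measurable_fst.snd.add (measurable_snd.const_smul η))).sub
        measurable_fst.fst)
    exact (measurableSet_eq_fun h1 h2).compl
  exact (measurable_measure_prodMk_left (ν := stdGaussian d) hS).ennreal_toReal

section Main
variable {d : ℕ} (D : Measure (EuclideanSpace ℝ (Fin d) × ℝ))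
  (p : EuclideanSpace ℝ (Fin d) → ℝ) (η : ℝ)

/-- joint (threshold, sample) noise sensitivity -/
noncomputable def Fj : ℝ × (EuclideanSpace ℝ (Fin d) × ℝ) → ℝ :=
  fun w => lns (fun y => sgn (p y - w.1)) η w.2.1

set_option maxHeartbeats 1000000 in
lemma Fj_meas (hp : Measurable p) : Measurable (Fj p η) :=
  (F_meas p hp η).comp (measurable_fst.prodMk measurable_snd.fst)

noncomputable def Gf : ℝ → ℝ := fun t => errD D (fun x => sgn (p x - t))

noncomputable def Hf : ℝ → ℝ := fun t =>
  ∫ q, lns (fun y => sgn (p y - t)) η q.1 ∂D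

noncomputable def Kf : ℝ → ℝ := fun t =>
  (D {q | 0.8 < lns (fun y => sgn (p y - t)) η q.1}).toReal

variable [IsProbabilityMeasure D]

lemma Gf_meas (hp : Measurable p) : Measurable (Gf D p) := by
  have hS : MeasurableSet {w : ℝ × (EuclideanSpace ℝ (Fin d) × ℝ) |
      sgn (p w.2.1 - w.1) ≠ w.2.2} := by
    have h1 : Measurable (fun w : ℝ × (EuclideanSpace ℝ (Fin d) × ℝ) =>
        sgn (p w.2.1 - w.1)) :=
      sgn_meas.comp ((hp.comp measurable_snd.fst).sub measurable_fst)
    exact (measurableSet_eq_fun h1 measurable_snd.snd).compl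
  exact (measurable_measure_prodMk_left (ν := D) hS).ennreal_toReal

lemma Kf_meas (hp : Measurable p) : Measurable (Kf D p η) := by
  have hS : MeasurableSet {w : ℝ × (EuclideanSpace ℝ (Fin d) × ℝ) | 0.8 < Fj p η w} :=
    measurableSet_lt measurable_const (Fj_meas p η hp)
  exact (measurable_measure_prodMk_left (ν := D) hS).ennreal_toReal

lemma Hf_meas (hp : Measurable p) : Measurable (Hf D p η) := by
  have := (Fj_meas p η hp).stronglyMeasurable.integral_prod_right' (ν := D)
  exact this.measurable

lemma Gf_mem (t : ℝ) : Gf D p t ∈ Set.Icc (0:ℝ) 1 :=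
  ⟨ENNReal.toReal_nonneg, toReal_prob_le_one _ _⟩

lemma Kf_mem (t : ℝ) : Kf D p η t ∈ Set.Icc (0:ℝ) 1 :=
  ⟨ENNReal.toReal_nonneg, toReal_prob_le_one _ _⟩

lemma lns_integrable (hp : Measurable p) (t : ℝ) :
    Integrable (fun q : EuclideanSpace ℝ (Fin d) × ℝ =>
      lns (fun y => sgn (p y - t)) η q.1) D := by
  refine ⟨((Fj_meas p η hp).comp (measurable_const.prodMk measurable_id)).aestronglyMeasurable,
    HasFiniteIntegral.of_bounded (C := 1) (ae_of_all _ fun q => ?_)⟩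
  rw [Real.norm_eq_abs, abs_of_nonneg (lns_nonneg _ _ _)]
  exact lns_le_one _ _ _

lemma Hf_mem (hp : Measurable p) (t : ℝ) : Hf D p η t ∈ Set.Icc (0:ℝ) 1 := by
  constructor
  · exact integral_nonneg fun q => lns_nonneg _ _ _
  · calc Hf D p η t ≤ ∫ _, (1:ℝ) ∂D :=
        integral_mono (lns_integrable D p η hp t) (integrable_const 1)
          (fun q => lns_le_one _ _ _)
    _ = 1 := by simp

end Main

section Main2
variable {d : ℕ} (D : Measure (EuclideanSpace ℝ (Fin d) × ℝ))
  (p : EuclideanSpace ℝ (Fin d) → ℝ) (η : ℝ)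

noncomputable def Vf : ℝ → Fin 3 → ℝ := fun t => ![Gf D p t, Hf D p η t, Kf D p η t]

variable [IsProbabilityMeasure D]

lemma Vf_meas (hp : Measurable p) : Measurable (Vf D p η) := by
  apply measurable_pi_lambda
  intro i
  fin_cases i
  · simpa [Vf] using Gf_meas D p hp
  · simpa [Vf] using Hf_meas D p η hp
  · simpa [Vf] using Kf_meas D p η hp

lemma Vf_integrable (hp : Measurable p) : Integrable (Vf D p η) unifI := by
  refine ⟨(Vf_meas D p η hp).aestronglyMeasurable,
    HasFiniteIntegral.of_bounded (C := 1) (ae_of_all _ fun t => ?_)⟩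
  rw [pi_norm_le_iff_of_nonneg zero_le_one]
  intro i
  have hmem : Vf D p η t i ∈ Set.Icc (0:ℝ) 1 := by
    fin_cases i
    · exact Gf_mem D p t
    · exact Hf_mem D p η hp t
    · exact Kf_mem D p η t
  rw [Real.norm_eq_abs, abs_of_nonneg hmem.1]
  exact hmem.2

end Main2

lemma sum_extend4 {ι : Type*} [Fintype ι] (e : ι → Fin 4) (he : Function.Injective e)
    (f : Fin 4 → ℝ) (hf : ∀ j, (¬ ∃ i, e i = j) → f j = 0) :
    ∑ j, f j = ∑ i, f (e i) := by
  classical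
  rw [← Finset.sum_image (g := e) (f := f) (fun x _ y _ h => he h)]
  refine (Finset.sum_subset (Finset.subset_univ _) ?_).symm
  intro j _ hj
  refine hf j ?_
  simpa [Finset.mem_image] using hj

set_option maxHeartbeats 1000000 in
theorem stmt17 :
    ∃ C : ℝ, 0 < C ∧
    ∀ (d : ℕ) (D : Measure (EuclideanSpace ℝ (Fin d) × ℝ)), IsProbabilityMeasure D →
    ∀ p : EuclideanSpace ℝ (Fin d) → ℝ, Measurable p →
    ∀ r ε : ℝ, r ∈ Set.Ioo (0:ℝ) 1 → ε ∈ Set.Ioo (0:ℝ) 1 →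
    ∀ α : ℝ, 0 ≤ α →
    (∫ t, ∫ q, lns (fun y => sgn (p y - t)) (10*r) q.1 ∂D ∂unifI) ≤ α →
    ((D.prod unifI) {q | 0.75 < lns (fun y => sgn (p y - q.2)) (10*r) q.1.1}
      ≤ ENNReal.ofReal ε) →
    ∃ (t : Fin 4 → ℝ) (w : Fin 4 → ℝ),
      (∀ i, t i ∈ Set.Icc (-1:ℝ) 1) ∧ (∀ i, 0 ≤ w i) ∧ (∑ i, w i) = 1 ∧
      (∑ i, w i * errD D (fun x => sgn (p x - t i)))
          ≤ (∫ s, errD D (fun x => sgn (p x - s)) ∂unifI) + C*ε ∧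
      (∑ i, w i * ∫ q, lns (fun y => sgn (p y - t i)) (10*r) q.1 ∂D) ≤ 2*α + C*ε ∧
      (∑ i, w i * (D {q | 0.8 < lns (fun y => sgn (p y - t i)) (10*r) q.1}).toReal)
          ≤ C*ε := by
  classical
  refine ⟨3, by norm_num, ?_⟩
  intro d D hD p hp r ε hr hε α hα hint hprod
  haveI := hD
  have hε0 : (0:ℝ) ≤ ε := le_of_lt hε.1
  have hVint : Integrable (Vf D p (10*r)) unifI := Vf_integrable D p (10*r) hp
  set b : Fin 3 → ℝ := ∫ t, Vf D p (10*r) t ∂unifI with hbdef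
  set A : Set (Fin 3 → ℝ) := Vf D p (10*r) '' Set.Icc (-1:ℝ) 1 with hAdef
  -- barycenter lies in the closed convex hull
  have hbmem : b ∈ closure (convexHull ℝ A) := by
    refine Convex.integral_mem ((convex_convexHull ℝ A).closure) isClosed_closure ?_ hVint
    have h1 : ∀ᵐ t ∂(volume.restrict (Set.Icc (-1:ℝ) 1)), t ∈ Set.Icc (-1:ℝ) 1 :=
      ae_restrict_mem measurableSet_Icc
    have h2 : ∀ᵐ t ∂unifI, t ∈ Set.Icc (-1:ℝ) 1 := Measure.ae_smul_measure h1 _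
    filter_upwards [h2] with t ht
    exact subset_closure (subset_convexHull ℝ A ⟨t, ht, rfl⟩)
  -- components of b
  have hbcomp : ∀ i : Fin 3, b i = ∫ t, Vf D p (10*r) t i ∂unifI := by
    intro i
    have := (ContinuousLinearMap.proj (R := ℝ) (φ := fun _ : Fin 3 => ℝ) i).integral_comp_comm
      hVint
    simpa using this.symm
  have hb0 : b 0 = ∫ t, Gf D p t ∂unifI := by
    rw [hbcomp 0]; exact integral_congr_ae (ae_of_all _ fun t => by simp [Vf])
  have hb1 : b 1 = ∫ t, Hf D p (10*r) t ∂unifI := by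
    rw [hbcomp 1]; exact integral_congr_ae (ae_of_all _ fun t => by simp [Vf])
  have hb2 : b 2 = ∫ t, Kf D p (10*r) t ∂unifI := by
    rw [hbcomp 2]; exact integral_congr_ae (ae_of_all _ fun t => by simp [Vf])
  have hHle : (∫ t, Hf D p (10*r) t ∂unifI) ≤ α := hint
  -- bound on the third component
  have hS75 : MeasurableSet {w : ℝ × (EuclideanSpace ℝ (Fin d) × ℝ) | 0.75 < Fj p (10*r) w} :=
    measurableSet_lt measurable_const (Fj_meas p (10*r) hp)
  have hS8 : MeasurableSet {w : ℝ × (EuclideanSpace ℝ (Fin d) × ℝ) | 0.8 < Fj p (10*r) w} :=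
    measurableSet_lt measurable_const (Fj_meas p (10*r) hp)
  have hKle : (∫ t, Kf D p (10*r) t ∂unifI) ≤ ε := by
    have hmeas : Measurable fun t : ℝ =>
        D (Prod.mk t ⁻¹' {w : ℝ × (EuclideanSpace ℝ (Fin d) × ℝ) | 0.8 < Fj p (10*r) w}) :=
      measurable_measure_prodMk_left hS8
    have heq : (∫ t, Kf D p (10*r) t ∂unifI)
        = (∫⁻ t, D (Prod.mk t ⁻¹'
            {w : ℝ × (EuclideanSpace ℝ (Fin d) × ℝ) | 0.8 < Fj p (10*r) w}) ∂unifI).toReal :=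
      integral_toReal hmeas.aemeasurable (ae_of_all _ fun t => measure_lt_top _ _)
    rw [heq]
    refine ENNReal.toReal_le_of_le_ofReal hε0 ?_
    have hmono : (∫⁻ t, D (Prod.mk t ⁻¹'
          {w : ℝ × (EuclideanSpace ℝ (Fin d) × ℝ) | 0.8 < Fj p (10*r) w}) ∂unifI)
        ≤ ∫⁻ t, D (Prod.mk t ⁻¹'
          {w : ℝ × (EuclideanSpace ℝ (Fin d) × ℝ) | 0.75 < Fj p (10*r) w}) ∂unifI := by
      refine lintegral_mono fun t => measure_mono fun q hq => ?_
      simp only [Set.mem_preimage, Set.mem_setOf_eq] at hq ⊢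
      linarith
    refine le_trans hmono (le_trans (le_of_eq ?_) hprod)
    calc (∫⁻ t, D (Prod.mk t ⁻¹'
          {w : ℝ × (EuclideanSpace ℝ (Fin d) × ℝ) | 0.75 < Fj p (10*r) w}) ∂unifI)
        = (unifI.prod D) {w : ℝ × (EuclideanSpace ℝ (Fin d) × ℝ) | 0.75 < Fj p (10*r) w} :=
          (Measure.prod_apply hS75).symm
      _ = ((D.prod unifI).map Prod.swap)
            {w : ℝ × (EuclideanSpace ℝ (Fin d) × ℝ) | 0.75 < Fj p (10*r) w} := by
          rw [Measure.prod_swap]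
      _ = (D.prod unifI) (Prod.swap ⁻¹'
            {w : ℝ × (EuclideanSpace ℝ (Fin d) × ℝ) | 0.75 < Fj p (10*r) w}) :=
          Measure.map_apply measurable_swap hS75
      _ = (D.prod unifI) {q : (EuclideanSpace ℝ (Fin d) × ℝ) × ℝ |
            0.75 < lns (fun y => sgn (p y - q.2)) (10*r) q.1.1} := rfl
  -- pick a nearby point of the hull
  obtain ⟨c, hcA, hbc⟩ := Metric.mem_closure_iff.1 hbmem ε hε.1
  have hcb : ∀ i : Fin 3, c i ≤ b i + ε := by
    intro i
    have h1 : dist (b i) (c i) ≤ dist b c := dist_le_pi_dist b c i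
    have h2 : |b i - c i| < ε := by rw [← Real.dist_eq]; exact lt_of_le_of_lt h1 hbc
    have h3 := abs_le.1 h2.le
    linarith [h3.1]
  -- Caratheodory
  obtain ⟨ι, hfin, z, w, hzs, hai, hw0, hw1, hwz⟩ := eq_pos_convex_span_of_mem_convexHull hcA
  letI := hfin
  have hcard : Fintype.card ι ≤ 4 := by
    have h1 := hai.card_le_finrank_succ
    have h2 := Submodule.finrank_le (vectorSpan ℝ (Set.range z))
    simp only [Module.finrank_fintype_fun_eq_card, Fintype.card_fin] at h2
    omega
  obtain ⟨e⟩ : Nonempty (ι ↪ Fin 4) := Function.Embedding.nonempty_of_card_le (by simpa using hcard)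
  have hτ : ∀ i : ι, ∃ s, s ∈ Set.Icc (-1:ℝ) 1 ∧ Vf D p (10*r) s = z i := by
    intro i
    rcases hzs (Set.mem_range_self i) with ⟨s, hs, hsv⟩
    exact ⟨s, hs, hsv⟩
  choose τ hτIcc hτV using hτ
  -- extended families
  set t' : Fin 4 → ℝ := Function.extend e τ (fun _ => 0) with ht'def
  set w' : Fin 4 → ℝ := Function.extend e w (fun _ => 0) with hw'def
  have hea : ∀ i : ι, t' (e i) = τ i := fun i => e.injective.extend_apply _ _ _
  have heb : ∀ i : ι, w' (e i) = w i := fun i => e.injective.extend_apply _ _ _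
  have key : ∀ (Φ : ℝ → ℝ) (l : Fin 3), (∀ s, Φ s = Vf D p (10*r) s l) →
      (∑ j, w' j * Φ (t' j)) = c l := by
    intro Φ l hΦ
    rw [sum_extend4 e e.injective _ (fun j hj => by
      rw [hw'def]; rw [Function.extend_apply' _ _ _ hj]; ring)]
    have h1 : ∀ i : ι, w' (e i) * Φ (t' (e i)) = w i * z i l := by
      intro i
      rw [hea, heb, hΦ, hτV]
    rw [Finset.sum_congr rfl fun i _ => h1 i]
    have h2 := congrFun hwz l
    rw [← h2, Finset.sum_apply]
    exact Finset.sum_congr rfl fun i _ => rfl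
  refine ⟨t', w', ?_, ?_, ?_, ?_, ?_, ?_⟩
  · intro j
    by_cases h : ∃ i, e i = j
    · obtain ⟨i, rfl⟩ := h
      rw [hea]
      exact hτIcc i
    · rw [ht'def, Function.extend_apply' _ _ _ h]
      constructor <;> norm_num
  · intro j
    by_cases h : ∃ i, e i = j
    · obtain ⟨i, rfl⟩ := h
      rw [heb]
      exact (hw0 i).le
    · rw [hw'def, Function.extend_apply' _ _ _ h]
  · rw [sum_extend4 e e.injective _ (fun j hj => by
      rw [hw'def]; exact Function.extend_apply' _ _ _ hj)]
    rw [Finset.sum_congr rfl fun i _ => heb i]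
    exact hw1
  · have e4 : (∑ j, w' j * errD D (fun x => sgn (p x - t' j))) = c 0 :=
      key (Gf D p) 0 (fun s => by simp [Vf])
    rw [e4]
    have : (∫ s, errD D (fun x => sgn (p x - s)) ∂unifI) = b 0 := hb0.symm
    rw [this]
    have := hcb 0
    linarith
  · have e5 : (∑ j, w' j * ∫ q, lns (fun y => sgn (p y - t' j)) (10*r) q.1 ∂D) = c 1 :=
      key (Hf D p (10*r)) 1 (fun s => by simp [Vf])
    rw [e5]
    have h1 := hcb 1
    rw [hb1] at h1
    linarith
  · have e6 : (∑ j, w' j *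
        (D {q | 0.8 < lns (fun y => sgn (p y - t' j)) (10*r) q.1}).toReal) = c 2 :=
      key (Kf D p (10*r)) 2 (fun s => by simp [Vf])
    rw [e6]
    have h1 := hcb 2
    rw [hb2] at h1
    linarith
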